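/- arXiv:2411.07895 — 3 statements merged into one kernel-verified Lean document; each statement's English description precedes it below -/
import Mathlib

section
/- Let R be a commutative ring and (M,λ,∂) a formed space with boundary over R. Then g_X(M,λ,∂) ≤ 1 + g_H(M,λ) + g_H(ker ∂, λ restricted to ker ∂). In particular, if g_X(M,λ,∂) ≥ 2n then g_H(M,λ) ≥ n. -/
/-- The hyperbolic genus of a module with a bilinear form: the largest `g` for which there is a
hyperbolic family `e₁, f₁, …, e_g, f_g`. -/
noncomputable def gH (R : Type) [CommRing R] (M : Type) (lam : M → M → R) : ℕ :=
  sSup {g : ℕ | ∃ e f : Fin g → M,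
    (∀ i j, lam (e i) (f j) = if i = j then 1 else 0) ∧
    (∀ i j, lam (e i) (e j) = 0) ∧ (∀ i j, lam (f i) (f j) = 0)}

/-- The arc genus of a formed space with boundary: the largest `g` for which there exist
`a₁, …, a_g` with `∂(aᵢ) = 1` for all `i` and `λ(aᵢ, aⱼ) = 1` for `i < j`. -/
noncomputable def gX (R : Type) [CommRing R] (M : Type) (lam : M → M → R) (bd : M → R) : ℕ :=
  sSup {g : ℕ | ∃ a : Fin g → M, (∀ i, bd (a i) = 1) ∧
    ∀ i j : Fin g, i < j → lam (a i) (a j) = 1}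

/-!
Differences of consecutive arcs `a₀, a₁ - a₀, a₂ - a₁, …` form a chain: the form pairs
neighbours to `±1` and everything else to `0`. From a chain `c₀, …, c_{m-1}` the vectors
`eᵢ = c₀ + c₂ + ⋯ + c_{2i}` and `fᵢ = c_{2i+1}` form a hyperbolic family of size `⌊m/2⌋`.
Applied to the chain of length `g` in `M`, and to the chain `a₁ - a₀, …` of length `g - 1`
inside `ker ∂`, this gives `⌊g/2⌋ ≤ g_H(M)` and `⌊(g-1)/2⌋ ≤ g_H(ker ∂)`. A hyperbolic family
is linearly independent, so these genera are finite over a nontrivial ring. Over the zero ring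
every `g` is realised by arcs, and the supremum defining `g_X` takes the junk value `0`.
-/

open Finset Module

section Hyperbolic

variable {R : Type*} [CommRing R]

def IsHyperbolicFamily {N : Type*} (lam : N → N → R) {n : ℕ} (e f : Fin n → N) : Prop :=
  (∀ i j, lam (e i) (f j) = if i = j then 1 else 0) ∧
    (∀ i j, lam (e i) (e j) = 0) ∧ (∀ i j, lam (f i) (f j) = 0)

variable {M : Type*} [AddCommGroup M] [Module R M] {lam : M →ₗ[R] M →ₗ[R] R}

theorem IsHyperbolicFamily.linearIndependent {n : ℕ} {e f : Fin n → M}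
    (h : IsHyperbolicFamily (fun x y => lam x y) e f) : LinearIndependent R (Sum.elim e f) := by
  obtain ⟨hef, hee, hff⟩ := h
  refine .of_pairwise_dual_eq_zero_one _
    (Sum.elim (fun i => lam.flip (f i)) (fun i => lam (e i))) ?_ ?_
  · rintro (i | i) (j | j) hij <;> simp_all [Ne.symm]
  · rintro (i | i) <;> simp [hef]

theorem IsHyperbolicFamily.two_mul_le_finrank [Nontrivial R] [Module.Finite R M] {n : ℕ}
    {e f : Fin n → M} (h : IsHyperbolicFamily (fun x y => lam x y) e f) :
    2 * n ≤ finrank R M := by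
  simpa [two_mul] using h.linearIndependent.fintype_card_le_finrank

end Hyperbolic

section Chain

variable {R M : Type*} [CommRing R] [AddCommGroup M] [Module R M] (lam : M →ₗ[R] M →ₗ[R] R)

def IsChainFamily (m : ℕ) (c : ℕ → M) : Prop :=
  ∀ p q, p < m → q < m → lam (c p) (c q) = if q = p + 1 then 1 else if p = q + 1 then -1 else 0

variable {lam} {m : ℕ} {c : ℕ → M}

theorem IsChainFamily.shift (hc : IsChainFamily lam m c) :
    IsChainFamily lam (m - 1) (fun k => c (k + 1)) := by
  intro p q hp hq
  simp only [hc _ _ (by omega : p + 1 < m) (by omega : q + 1 < m), add_left_inj]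

theorem IsChainFamily.isHyperbolicFamily (hc : IsChainFamily lam m c) :
    IsHyperbolicFamily (fun x y => lam x y)
      (fun i : Fin (m / 2) => ∑ k ∈ range (i + 1), c (2 * k)) (fun i => c (2 * i + 1)) := by
  have hmix : ∀ k j, 2 * k < m → 2 * j + 1 < m →
      lam (c (2 * k)) (c (2 * j + 1)) = (if j = k then 1 else 0) - if j + 1 = k then 1 else 0 := by
    intro k j hk hj
    rw [hc _ _ hk hj]
    split_ifs <;> first | omega | ring
  have heven : ∀ k l, 2 * k < m → 2 * l < m → lam (c (2 * k)) (c (2 * l)) = 0 := by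
    intro k l hk hl
    rw [hc _ _ hk hl, if_neg (by omega), if_neg (by omega)]
  refine ⟨fun i j => ?_, fun i j => ?_, fun i j => ?_⟩
  · simp only [map_sum, LinearMap.sum_apply]
    rw [sum_congr rfl fun k hk => hmix k j (by rw [mem_range] at hk; omega) (by omega),
      sum_sub_distrib, sum_ite_eq, sum_ite_eq]
    simp only [mem_range, Fin.ext_iff]
    split_ifs <;> first | omega | ring
  · simp only [map_sum, LinearMap.sum_apply]
    exact sum_eq_zero fun l hl => sum_eq_zero fun k hk =>
      heven k l (by rw [mem_range] at hk; omega) (by rw [mem_range] at hl; omega)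
  · dsimp only
    rw [hc _ _ (by omega) (by omega), if_neg (by omega), if_neg (by omega)]

theorem exists_isChainFamily_of_arcs (halt : lam.IsAlt) (bd : M →ₗ[R] R) {g : ℕ}
    {a : Fin g → M} (hbd : ∀ i, bd (a i) = 1) (hlam : ∀ i j, i < j → lam (a i) (a j) = 1) :
    ∃ c : ℕ → M, IsChainFamily lam g c ∧ ∀ k, k + 1 < g → c (k + 1) ∈ LinearMap.ker bd := by
  let A : ℕ → M := fun n => if h : 0 < n ∧ n ≤ g then a ⟨n - 1, by omega⟩ else 0
  have hA : ∀ i j, i ≤ g → j ≤ g → lam (A i) (A j) =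
      if 0 < i ∧ i < j then 1 else if 0 < j ∧ j < i then -1 else 0 := by
    intro i j hi hj
    by_cases hi0 : i = 0
    · simp [A, hi0]
    by_cases hj0 : j = 0
    · simp [A, hj0]
    simp only [A, dif_pos (⟨Nat.pos_of_ne_zero hi0, hi⟩ : 0 < i ∧ i ≤ g),
      dif_pos (⟨Nat.pos_of_ne_zero hj0, hj⟩ : 0 < j ∧ j ≤ g)]
    rcases lt_trichotomy i j with hij | rfl | hij
    · rw [hlam _ _ (by simp [Fin.lt_def]; omega), if_pos (by omega)]
    · simp [halt.self_eq_zero]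
    · rw [← halt.neg, hlam _ _ (by simp [Fin.lt_def]; omega), if_neg (by omega),
        if_pos (by omega)]
  have hbdA : ∀ n, 0 < n → n ≤ g → bd (A n) = 1 := fun n hn hng => by
    simp only [A, dif_pos (⟨hn, hng⟩ : 0 < n ∧ n ≤ g), hbd]
  refine ⟨fun k => A (k + 1) - A k, fun p q hp hq => ?_, fun k hk => ?_⟩
  · simp only [map_sub, LinearMap.sub_apply,
      hA (p + 1) (q + 1) (by omega) (by omega), hA (p + 1) q (by omega) (by omega),
      hA p (q + 1) (by omega) (by omega), hA p q (by omega) (by omega)]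
    split_ifs <;> first | omega | ring
  · rw [LinearMap.mem_ker, map_sub, hbdA _ (by omega) (by omega), hbdA _ (by omega) (by omega),
      sub_self]

end Chain

theorem gX_eq_zero_of_subsingleton {R M : Type} [CommRing R] [Subsingleton R] [Zero M]
    (lam : M → M → R) (bd : M → R) : gX R M lam bd = 0 :=
  Nat.sSup_of_not_bddAbove fun ⟨c, hc⟩ => c.not_succ_le_self <|
    hc (a := c + 1)
      ⟨fun _ => 0, fun _ => Subsingleton.elim _ _, fun _ _ _ => Subsingleton.elim _ _⟩

section Genus

variable {R M : Type} [CommRing R] [Nontrivial R] [AddCommGroup M] [Module R M]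
  [Module.Finite R M] (lam : M →ₗ[R] M →ₗ[R] R)

theorem bddAbove_isHyperbolicFamily_comp {N : Type*} (φ : N → M) :
    BddAbove {g | ∃ e f : Fin g → N, IsHyperbolicFamily (fun x y => lam (φ x) (φ y)) e f} :=
  ⟨finrank R M, fun g ⟨_, _, h⟩ => by
    have := IsHyperbolicFamily.two_mul_le_finrank (e := φ ∘ _) (f := φ ∘ _) h
    omega⟩

variable {lam} {n : ℕ} {e f : Fin n → M}

theorem le_gH (h : IsHyperbolicFamily (fun x y => lam x y) e f) :
    n ≤ gH R M (fun x y => lam x y) :=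
  le_csSup (bddAbove_isHyperbolicFamily_comp lam id) ⟨e, f, h⟩

theorem le_gH_submodule (p : Submodule R M) (h : IsHyperbolicFamily (fun x y => lam x y) e f)
    (he : ∀ i, e i ∈ p) (hf : ∀ i, f i ∈ p) : n ≤ gH R p (fun x y => lam x y) :=
  le_csSup (bddAbove_isHyperbolicFamily_comp lam Subtype.val)
    ⟨fun i => ⟨e i, he i⟩, fun i => ⟨f i, hf i⟩, h⟩

theorem le_gH_of_arcs (halt : lam.IsAlt) (bd : M →ₗ[R] R) {g : ℕ} {a : Fin g → M}
    (hbd : ∀ i, bd (a i) = 1) (hlam : ∀ i j, i < j → lam (a i) (a j) = 1) :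
    g / 2 ≤ gH R M (fun x y => lam x y) ∧
      (g - 1) / 2 ≤ gH R (LinearMap.ker bd) (fun x y => lam x y) := by
  obtain ⟨c, hc, hker⟩ := exists_isChainFamily_of_arcs halt bd hbd hlam
  refine ⟨le_gH hc.isHyperbolicFamily, le_gH_submodule _ hc.shift.isHyperbolicFamily ?_ ?_⟩
  · exact fun i => sum_mem fun k hk => hker _ (by rw [mem_range] at hk; omega)
  · exact fun i => hker _ (by omega)

end Genus

theorem gX_le_genus_formula_general
    (R : Type) [CommRing R]
    (M : Type) [AddCommGroup M] [Module R M] [Module.Finite R M]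
    (lam : M →ₗ[R] M →ₗ[R] R) (halt : ∀ v : M, lam v v = 0) (bd : M →ₗ[R] R) :
    gX R M (fun x y => lam x y) (fun x => bd x) ≤
      1 + gH R M (fun x y => lam x y)
        + gH R ↥(LinearMap.ker bd) (fun x y => lam (x : M) (y : M)) ∧
    ∀ n : ℕ, 2 * n ≤ gX R M (fun x y => lam x y) (fun x => bd x) →
      n ≤ gH R M (fun x y => lam x y) := by
  rcases subsingleton_or_nontrivial R with hR | hR
  · simp [gX_eq_zero_of_subsingleton]
  refine ⟨csSup_le' ?_, fun n hn => ?_⟩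
  · rintro g ⟨a, hbd, hlam⟩
    have := le_gH_of_arcs halt bd hbd hlam
    omega
  · have : gX R M (fun x y => lam x y) (fun x => bd x) ≤ 2 * gH R M (fun x y => lam x y) + 1 :=
      csSup_le' fun g ⟨a, hbd, hlam⟩ => by
        have := (le_gH_of_arcs halt bd hbd hlam).1
        omega
    omega

/-- for any formed space with boundary over a commutative ring,
`g_X(M,λ,∂) ≤ 1 + g_H(M,λ) + g_H(ker ∂, λ|_{ker ∂})`; in particular `g_X ≥ 2n` implies
`g_H(M,λ) ≥ n`. -/
theorem gX_le_genus_formula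
    (R : Type) [CommRing R]
    (M : Type) [AddCommGroup M] [Module R M] [Module.Finite R M] [Module.Free R M]
    (lam : M →ₗ[R] M →ₗ[R] R) (halt : ∀ v : M, lam v v = 0) (bd : M →ₗ[R] R) :
    gX R M (fun x y => lam x y) (fun x => bd x) ≤
      1 + gH R M (fun x y => lam x y)
        + gH R ↥(LinearMap.ker bd) (fun x y => lam (x : M) (y : M)) ∧
    ∀ n : ℕ, 2 * n ≤ gX R M (fun x y => lam x y) (fun x => bd x) →
      n ≤ gH R M (fun x y => lam x y) :=
  gX_le_genus_formula_general R M lam halt bd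
end

section
/- Let R be a principal ideal domain, (M,λ,∂) a formed space with boundary over R, and l : M → R an R-linear functional such that the pair {l, ∂} is unimodular in Hom_R(M,R), i.e. there exist u, v ∈ M with l(u) = 1, ∂(u) = 0, l(v) = 0, ∂(v) = 1. Then g_X(ker l, λ restricted to ker l, ∂ restricted to ker l) ≥ g_X(M,λ,∂) − 2. -/

private lemma skew_aux {R : Type} [CommRing R] {M : Type} [AddCommGroup M] [Module R M]
    (lam : M →ₗ[R] M →ₗ[R] R) (halt : ∀ v : M, lam v v = 0) (x y : M) :
    lam x y = - lam y x := by
  have h := halt (x + y)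
  simp only [map_add, LinearMap.add_apply, halt, zero_add, add_zero] at h
  linear_combination h

private lemma exists_coprime_shift {R : Type} [CommRing R] [IsDomain R]
    [IsPrincipalIdealRing R] (τ β₀ c : R) (hτ : τ ≠ 0) :
    ∃ x : R, IsCoprime τ (β₀ + x * (1 - c * β₀)) := by
  classical
  set x : R := ((UniqueFactorizationMonoid.factors τ).filter (fun p => ¬ p ∣ β₀)).prod with hx
  refine ⟨x, isCoprime_of_prime_dvd (fun h => hτ h.1) ?_⟩
  intro z hz hzτ hzB
  by_cases hzb : z ∣ β₀
  · have h1 : z ∣ x * (1 - c * β₀) := by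
      have he : x * (1 - c * β₀) = (β₀ + x * (1 - c * β₀)) - β₀ := by ring
      rw [he]; exact dvd_sub hzB hzb
    rcases hz.dvd_mul.mp h1 with h2 | h2
    · obtain ⟨p, hpmem, hzp⟩ := hz.exists_mem_multiset_dvd h2
      rw [Multiset.mem_filter] at hpmem
      have hp : Prime p := UniqueFactorizationMonoid.prime_of_factor p hpmem.1
      have hass : Associated z p := hz.irreducible.associated_of_dvd hp.irreducible hzp
      exact hpmem.2 (hass.symm.dvd.trans hzb)
    · have h3 : z ∣ (1 : R) := by
        have he : (1 : R) = (1 - c * β₀) + c * β₀ := by ring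
        rw [he]; exact dvd_add h2 (Dvd.dvd.mul_left hzb c)
      exact hz.not_unit (isUnit_of_dvd_one h3)
  · have hzx : z ∣ x := by
      have h4 : z ∣ (UniqueFactorizationMonoid.factors τ).prod :=
        hzτ.trans (UniqueFactorizationMonoid.factors_prod hτ).symm.dvd
      obtain ⟨p, hpmem, hzp⟩ := hz.exists_mem_multiset_dvd h4
      have hpb : ¬ p ∣ β₀ := fun hc => hzb (hzp.trans hc)
      have : p ∈ (UniqueFactorizationMonoid.factors τ).filter (fun p => ¬ p ∣ β₀) :=
        Multiset.mem_filter.mpr ⟨hpmem, hpb⟩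
      exact hzp.trans (Multiset.dvd_prod this)
    have h5 : z ∣ β₀ := by
      have he : β₀ = (β₀ + x * (1 - c * β₀)) - x * (1 - c * β₀) := by ring
      rw [he]; exact dvd_sub hzB (hzx.mul_right _)
    exact hzb h5

private lemma construction_aux {R : Type} [CommRing R] {M : Type} [AddCommGroup M] [Module R M]
    (lam : M →ₗ[R] M →ₗ[R] R) (halt : ∀ v : M, lam v v = 0)
    (bd : M →ₗ[R] R) (l : M →ₗ[R] R)
    {g : ℕ} (a : Fin g → M)
    (ha1 : ∀ i, bd (a i) = 1)
    (ha2 : ∀ i j : Fin g, i < j → lam (a i) (a j) = 1)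
    (J J' : Fin g) (hadj : (J : ℕ) + 1 = (J' : ℕ))
    (u' : M) (hlu : l u' = 1) (hbu : bd u' = 0)
    (p q : R)
    (hpq : p * (l (a J) - l (a J'))
         + q * (lam (a J) u' - lam (a J') u') = -1) :
    ∃ c : Fin (g - 2) → M,
      (∀ i, l (c i) = 0) ∧ (∀ i, bd (c i) = 1) ∧
      (∀ i k : Fin (g - 2), i < k → lam (c i) (c k) = 1) := by
  classical
  have hanti : ∀ x y : M, lam x y = - lam y x := skew_aux lam halt
  have hJ'g : (J' : ℕ) < g := J'.isLt
  -- kept index embedding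
  have hgk : ∀ i : Fin (g - 2), (if (i : ℕ) < (J : ℕ) then (i : ℕ) else (i : ℕ) + 2) < g := by
    intro i; have := i.isLt; split <;> omega
  set κ : Fin (g - 2) → Fin g := fun i => ⟨_, hgk i⟩ with hκ
  have hκval : ∀ i : Fin (g - 2),
      ((κ i : Fin g) : ℕ) = if (i : ℕ) < (J : ℕ) then (i : ℕ) else (i : ℕ) + 2 :=
    fun i => rfl
  have hκlt : ∀ i : Fin (g - 2), ((κ i : ℕ) < (J : ℕ) ∨ (J' : ℕ) < (κ i : ℕ)) := by
    intro i; rw [hκval]; split <;> omega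
  have hmono : ∀ i k : Fin (g - 2), i < k → κ i < κ k := by
    intro i k h
    have hik : (i : ℕ) < (k : ℕ) := h
    have : ((κ i : Fin g) : ℕ) < ((κ k : Fin g) : ℕ) := by
      rw [hκval, hκval]; split <;> split <;> omega
    exact this
  -- basic pairing values
  have hJJ' : lam (a J) (a J') = 1 := ha2 J J' (by rw [Fin.lt_def]; omega)
  have hJ'J : lam (a J') (a J) = -1 := by rw [hanti (a J') (a J), hJJ']
  have hJκ : ∀ i : Fin (g - 2), lam (a J) (a (κ i)) = lam (a J') (a (κ i)) := by
    intro i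
    rcases hκlt i with h | h
    · have h1 : κ i < J := by rw [Fin.lt_def]; omega
      have h2 : κ i < J' := by rw [Fin.lt_def]; omega
      rw [hanti (a J) (a (κ i)), hanti (a J') (a (κ i)), ha2 _ _ h1, ha2 _ _ h2]
    · have h1 : J < κ i := by rw [Fin.lt_def]; omega
      have h2 : J' < κ i := by rw [Fin.lt_def]; omega
      rw [ha2 _ _ h1, ha2 _ _ h2]
  have hκJ : ∀ i : Fin (g - 2), lam (a (κ i)) (a J') = lam (a (κ i)) (a J) := by
    intro i
    rw [hanti (a (κ i)) (a J'), hanti (a (κ i)) (a J), hJκ i]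
  -- scalars
  set τ : R := l (a J) - l (a J') with hτ
  set B : R := lam (a J) u' - lam (a J') u' with hB
  set x : Fin (g - 2) → R := fun i => p * l (a (κ i)) + q * lam (a (κ i)) u' with hx
  set T : Fin (g - 2) → R := fun i => l (a (κ i)) + x i * τ with hT
  refine ⟨fun i => a (κ i) + x i • (a J - a J') - T i • u', ?_, ?_, ?_⟩
  · intro i
    simp only [map_sub, map_add, map_smul, smul_eq_mul, hlu, LinearMap.sub_apply,
      LinearMap.add_apply, LinearMap.smul_apply]
    rw [hT]
    simp only [hτ]
    ring
  · intro i
    simp only [map_sub, map_add, map_smul, smul_eq_mul, hbu, ha1, LinearMap.sub_apply,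
      LinearMap.add_apply, LinearMap.smul_apply]
    ring
  · intro i k hik
    simp only [map_sub, map_add, map_smul, smul_eq_mul, LinearMap.sub_apply,
      LinearMap.add_apply, LinearMap.smul_apply]
    rw [ha2 _ _ (hmono i k hik), hanti (a J) (a (κ k)), hanti (a J') (a (κ k)),
        hκJ i, hκJ k, hanti u' (a (κ k)), hanti u' (a J), hanti u' (a J'), hJJ', hJ'J]
    simp only [halt]
    simp only [hT, hx, hτ, hB]
    linear_combination (l (a (κ i)) * lam (a (κ k)) u' - l (a (κ k)) * lam (a (κ i)) u') * hpq

private lemma key_aux {R : Type} [CommRing R] [IsDomain R] [IsPrincipalIdealRing R]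
    {M : Type} [AddCommGroup M] [Module R M]
    (lam : M →ₗ[R] M →ₗ[R] R) (halt : ∀ v : M, lam v v = 0)
    (bd : M →ₗ[R] R) (l : M →ₗ[R] R)
    (u : M) (hu1 : l u = 1) (hu0 : bd u = 0)
    {g : ℕ} (a : Fin g → M)
    (ha1 : ∀ i, bd (a i) = 1)
    (ha2 : ∀ i j : Fin g, i < j → lam (a i) (a j) = 1) :
    ∃ c : Fin (g - 2) → M,
      (∀ i, l (c i) = 0) ∧ (∀ i, bd (c i) = 1) ∧
      (∀ i k : Fin (g - 2), i < k → lam (c i) (c k) = 1) := by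
  classical
  by_cases hg : g < 3
  · exact ⟨fun i => absurd i.isLt (by omega), fun i => absurd i.isLt (by omega),
      fun i => absurd i.isLt (by omega), fun i => absurd i.isLt (by omega)⟩
  push_neg at hg
  have hanti : ∀ x y : M, lam x y = - lam y x := skew_aux lam halt
  by_cases hall : ∀ i k : Fin g, l (a i) = l (a k)
  · -- all boundary values of l equal
    set J : Fin g := ⟨0, by omega⟩ with hJdef
    set J' : Fin g := ⟨1, by omega⟩ with hJ'def
    set i₀ : Fin g := ⟨2, by omega⟩ with hi₀def
    have h01 : lam (a J) (a J') = 1 :=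
      ha2 _ _ (by rw [hJdef, hJ'def]; exact Fin.mk_lt_mk.mpr (by omega))
    have h02 : lam (a J) (a i₀) = 1 :=
      ha2 _ _ (by rw [hJdef, hi₀def]; exact Fin.mk_lt_mk.mpr (by omega))
    have h12 : lam (a J') (a i₀) = 1 :=
      ha2 _ _ (by rw [hJ'def, hi₀def]; exact Fin.mk_lt_mk.mpr (by omega))
    have h10 : lam (a J') (a J) = -1 := by rw [hanti (a J') (a J), h01]
    set β₀ : R := lam (a J) u - lam (a J') u with hβ₀
    set u' : M := u + (1 - β₀) • (a J - a i₀) with hu'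
    have hlu : l u' = 1 := by
      have h := hall J i₀
      simp only [hu', map_add, map_smul, map_sub, smul_eq_mul, hu1]
      rw [h]; ring
    have hbu : bd u' = 0 := by
      simp only [hu', map_add, map_smul, map_sub, smul_eq_mul, hu0, ha1]
      ring
    have hBval : lam (a J) u' - lam (a J') u' = 1 := by
      simp only [hu', map_add, map_smul, map_sub, smul_eq_mul]
      rw [halt (a J), h02, h10, h12]
      simp only [hβ₀]
      ring
    apply construction_aux lam halt bd l a ha1 ha2 J J' rfl u' hlu hbu 0 (-1)
    rw [hBval]; ring
  · -- some adjacent pair has different l-values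
    have hadj : ∃ J J' : Fin g, ((J : ℕ) + 1 = (J' : ℕ)) ∧ l (a J) ≠ l (a J') := by
      by_contra hc
      push_neg at hc
      apply hall
      have hconst : ∀ n (hn : n < g), l (a ⟨n, hn⟩) = l (a ⟨0, by omega⟩) := by
        intro n
        induction n with
        | zero => intro hn; rfl
        | succ m ih =>
          intro hn
          have h1 : m < g := by omega
          have h2 := hc ⟨m, h1⟩ ⟨m + 1, hn⟩ rfl
          rw [← h2]
          exact ih h1
      intro i k
      exact (hconst i.1 i.2).trans (hconst k.1 k.2).symm
    obtain ⟨J, J', hJJ', hne⟩ := hadj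
    have hj1 : (J' : ℕ) < g := J'.isLt
    have hout : ∃ i₀ : Fin g, (i₀ : ℕ) < (J : ℕ) ∨ (J' : ℕ) < (i₀ : ℕ) := by
      by_cases h : (J : ℕ) = 0
      · exact ⟨⟨2, by omega⟩, by right; show (J' : ℕ) < 2; omega⟩
      · exact ⟨⟨0, by omega⟩, by left; show 0 < (J : ℕ); omega⟩
    obtain ⟨i₀, hi₀⟩ := hout
    have hvalJ : lam (a J) (a J') = 1 := ha2 _ _ (by rw [Fin.lt_def]; omega)
    have hJ'J : lam (a J') (a J) = -1 := by rw [hanti (a J') (a J), hvalJ]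
    have hval : lam (a J) (a i₀) = lam (a J') (a i₀) := by
      rcases hi₀ with h | h
      · have h1 : i₀ < J := by rw [Fin.lt_def]; omega
        have h2 : i₀ < J' := by rw [Fin.lt_def]; omega
        rw [hanti (a J) (a i₀), hanti (a J') (a i₀), ha2 _ _ h1, ha2 _ _ h2]
      · have h1 : J < i₀ := by rw [Fin.lt_def]; omega
        have h2 : J' < i₀ := by rw [Fin.lt_def]; omega
        rw [ha2 _ _ h1, ha2 _ _ h2]
    set τ : R := l (a J) - l (a J') with hτdef
    have hτ0 : τ ≠ 0 := sub_ne_zero_of_ne hne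
    set cc : R := l (a J) - l (a i₀) with hccdef
    set β₀ : R := lam (a J) u - lam (a J') u with hβ₀
    obtain ⟨x, hcop⟩ := exists_coprime_shift τ β₀ cc hτ0
    set k₀ : M := a J - a i₀ - cc • u with hk₀
    set u' : M := u + x • k₀ with hu'
    have hlu : l u' = 1 := by
      simp only [hu', hk₀, map_add, map_smul, map_sub, smul_eq_mul, hu1, hccdef]
      ring
    have hbu : bd u' = 0 := by
      simp only [hu', hk₀, map_add, map_smul, map_sub, smul_eq_mul, hu0, ha1]
      ring
    have hBval : lam (a J) u' - lam (a J') u' = β₀ + x * (1 - cc * β₀) := by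
      simp only [hu', hk₀, map_add, map_smul, map_sub, smul_eq_mul]
      rw [halt (a J), hJ'J, hval]
      simp only [hβ₀]
      ring
    obtain ⟨p₀, q₀, hpq₀⟩ := hcop
    apply construction_aux lam halt bd l a ha1 ha2 J J' hJJ' u' hlu hbu (-p₀) (-q₀)
    rw [hBval, ← hτdef]
    linear_combination (-1 : R) * hpq₀

/-- over a PID, if `{l, ∂}` is a unimodular pair of functionals on a formed
space with boundary `(M, λ, ∂)`, then `g_X(ker l, λ|_{ker l}, ∂|_{ker l}) ≥ g_X(M,λ,∂) - 2`. -/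
theorem gX_ker_ge
    (R : Type) [CommRing R] [IsDomain R] [IsPrincipalIdealRing R]
    (M : Type) [AddCommGroup M] [Module R M] [Module.Finite R M] [Module.Free R M]
    (lam : M →ₗ[R] M →ₗ[R] R) (halt : ∀ v : M, lam v v = 0) (bd : M →ₗ[R] R)
    (l : M →ₗ[R] R)
    (hunim : ∃ u v : M, l u = 1 ∧ bd u = 0 ∧ l v = 0 ∧ bd v = 1) :
    gX R M (fun x y => lam x y) (fun x => bd x) - 2 ≤
      gX R ↥(LinearMap.ker l) (fun x y => lam (x : M) (y : M)) (fun x => bd (x : M)) := by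
  classical
  obtain ⟨u, v, hu1, hu0, hv0, hv1⟩ := hunim
  set SM : Set ℕ := {g : ℕ | ∃ a : Fin g → M, (∀ i, bd (a i) = 1) ∧
    ∀ i j : Fin g, i < j → lam (a i) (a j) = 1} with hSM
  set SK : Set ℕ := {g : ℕ | ∃ a : Fin g → ↥(LinearMap.ker l),
    (∀ i, bd ((a i) : M) = 1) ∧
    ∀ i j : Fin g, i < j → lam ((a i) : M) ((a j) : M) = 1} with hSK
  have hgoal : gX R M (fun x y => lam x y) (fun x => bd x) = sSup SM := rfl
  have hgoal2 : gX R ↥(LinearMap.ker l) (fun x y => lam (x : M) (y : M))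
      (fun x => bd (x : M)) = sSup SK := rfl
  rw [hgoal, hgoal2]
  have h0M : 0 ∈ SM := ⟨Fin.elim0, fun i => i.elim0, fun i => i.elim0⟩
  have hsub : SK ⊆ SM := by
    rintro n ⟨a, h1, h2⟩
    exact ⟨fun i => ((a i : M)), h1, h2⟩
  by_cases hb : BddAbove SM
  · have h1 : sSup SM ∈ SM := Nat.sSup_mem ⟨0, h0M⟩ hb
    obtain ⟨a, ha1, ha2⟩ := h1
    obtain ⟨c, hc1, hc2, hc3⟩ := key_aux lam halt bd l u hu1 hu0 a ha1 ha2
    have hmem : sSup SM - 2 ∈ SK :=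
      ⟨fun i => ⟨c i, LinearMap.mem_ker.mpr (hc1 i)⟩, fun i => hc2 i,
        fun i k hik => hc3 i k hik⟩
    exact le_csSup (hb.mono hsub) hmem
  · rw [csSup_of_not_bddAbove hb, csSup_empty]
    exact Nat.zero_le _
end

section
/- Let R be a principal ideal domain and let (M₁,λ₁,∂₁) and (M₂,λ₂,∂₂) be formed spaces with boundary over R such that ∂₁ and ∂₂ are surjective. If (M₁,λ₁,∂₁) # X is isomorphic to (M₂,λ₂,∂₂) # X as formed spaces with boundary, then (M₁,λ₁,∂₁) is isomorphic to (M₂,λ₂,∂₂). -/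
/-!
An isomorphism `e : M₁ # X ≅ M₂ # X` preserves boundaries, so it restricts to an isometry
`f : M₁ ≅ M₂` between the kernels of the boundary maps (the graphs of `-∂ᵢ`), and
`∂₂ ∘ f = ∂₁ + λ₂(x₀, f ·)` where `x₀` is the `M₂`-component of `e (0, 1)`. It remains to find an
isometry `W` of `(M₂, λ₂)` with `∂₂ ∘ W = ∂₂ - λ₂(x₀, ·)`. If `β = ∂₂ x₀ ≠ 0`, choose `v` with
`∂₂ v` and `∂₂ v - λ₂(x₀, v)` both prime to `β` (a prime-by-prime construction, possible over a
PID because both functionals are surjective) and take `W y = y + ψ(y) x₀ + θ(y) v` with `ψ, θ`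
suitable combinations of `λ₂(x₀, ·)` and `λ₂(v, ·)`. The case `β = 0` reduces to this one after
conjugating by a symplectic transvection.
-/

section Coprime

variable {R M : Type*} [CommRing R] [AddCommGroup M] [Module R M]

theorem exists_not_dvd_apply_of_surjective {φ₁ φ₂ : M →ₗ[R] R}
    (h₁ : Function.Surjective φ₁) (h₂ : Function.Surjective φ₂) {p : R} (hp : ¬IsUnit p) :
    ∃ w, ¬p ∣ φ₁ w ∧ ¬p ∣ φ₂ w := by
  obtain ⟨a, ha⟩ := h₁ 1
  obtain ⟨b, hb⟩ := h₂ 1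
  have h1 : ¬p ∣ 1 := fun h => hp (isUnit_of_dvd_one h)
  by_cases hpa : p ∣ φ₂ a
  · by_cases hpb : p ∣ φ₁ b
    · refine ⟨a + b, ?_, ?_⟩
      · rw [map_add, ha, dvd_add_left hpb]; exact h1
      · rw [map_add, hb, dvd_add_right hpa]; exact h1
    · exact ⟨b, hpb, hb ▸ h1⟩
  · exact ⟨a, ha ▸ h1, hpa⟩

variable [IsDomain R] [IsPrincipalIdealRing R]

theorem Prime.isCoprime_mul_add_mul {p a x y : R} (hp : Prime p) (hpa : ¬p ∣ a)
    (hx : IsCoprime x a) (hy : ¬p ∣ y) : IsCoprime (p * x + a * y) (p * a) := by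
  have hap : IsCoprime a p := (hp.coprime_iff_not_dvd.mpr hpa).symm
  have hyp : IsCoprime y p := (hp.coprime_iff_not_dvd.mpr hy).symm
  refine IsCoprime.mul_right ?_ ?_
  · rw [add_comm, mul_comm p x]
    exact (hap.mul_left hyp).add_mul_right_left x
  · rw [mul_comm a y]
    exact (hap.symm.mul_left hx).add_mul_right_left y

theorem exists_isCoprime_apply_of_surjective {φ₁ φ₂ : M →ₗ[R] R}
    (h₁ : Function.Surjective φ₁) (h₂ : Function.Surjective φ₂) {β : R} (hβ : β ≠ 0) :
    ∃ v, IsCoprime (φ₁ v) β ∧ IsCoprime (φ₂ v) β := by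
  induction β using UniqueFactorizationMonoid.induction_on_prime with
  | h₁ => exact absurd rfl hβ
  | h₂ u hu =>
    have hcop : ∀ x, IsCoprime x u := fun _ => isCoprime_one_right.of_isCoprime_of_dvd_right hu.dvd
    exact ⟨0, hcop _, hcop _⟩
  | h₃ a p ha hp ih =>
    obtain ⟨v, hv₁, hv₂⟩ := ih ha
    by_cases hpa : p ∣ a
    · have hcop : ∀ {x}, IsCoprime x a → IsCoprime x (p * a) := fun h =>
        (h.of_isCoprime_of_dvd_right hpa).mul_right h
      exact ⟨v, hcop hv₁, hcop hv₂⟩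
    · obtain ⟨w, hw₁, hw₂⟩ := exists_not_dvd_apply_of_surjective h₁ h₂ hp.not_isUnit
      refine ⟨p • v + a • w, ?_, ?_⟩ <;> simp only [map_add, map_smul, smul_eq_mul]
      exacts [hp.isCoprime_mul_add_mul hpa hv₁ hw₁, hp.isCoprime_mul_add_mul hpa hv₂ hw₂]

end Coprime

namespace LinearMap

variable {R M : Type*} [CommRing R] [AddCommGroup M] [Module R M] {B : M →ₗ[R] M →ₗ[R] R}

theorem IsOrthogonal.linearEquiv_symm {e : M ≃ₗ[R] M} (he : B.IsOrthogonal e) :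
    B.IsOrthogonal e.symm := fun y z => by
  simpa using (he (e.symm y) (e.symm z)).symm

theorem IsOrthogonal.linearEquiv_trans {e f : M ≃ₗ[R] M} (he : B.IsOrthogonal e)
    (hf : B.IsOrthogonal f) : B.IsOrthogonal (e.trans f) := fun y z =>
  (hf (e y) (e z)).trans (he y z)

variable (B) in
/-- The map `1 + U A U*` for `U (a, b) = a • x + b • v`, `U* y = (B x y, B v y)` and
`A = !![p, s; q, t]`. For alternating `B` it is an isometry when `q - s + B x v * det A = 0`, and
then its inverse has coefficient matrix `-Aᵀ`. -/
def pairTransvection (x v : M) (p s q t : R) : M →ₗ[R] M :=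
  id + (p • B x + s • B v).smulRight x + (q • B x + t • B v).smulRight v

variable (B) in
@[simp]
theorem pairTransvection_apply (x v : M) (p s q t : R) (y : M) :
    B.pairTransvection x v p s q t y =
      y + (p * B x y + s * B v y) • x + (q * B x y + t * B v y) • v := by
  simp [pairTransvection]

variable {x v : M} {p s q t : R}

theorem pairTransvection_apply_pairTransvection (hB : B.IsAlt)
    (h : q - s + B x v * (p * t - s * q) = 0) (y : M) :
    B.pairTransvection x v p s q t (B.pairTransvection x v (-p) (-q) (-s) (-t) y) = y := by
  simp only [pairTransvection_apply, map_add, map_smul, hB.self_eq_zero, ← hB.neg x v]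
  match_scalars
  · ring
  · linear_combination -B v y * h
  · linear_combination B x y * h

theorem isOrthogonal_pairTransvection (hB : B.IsAlt) (h : q - s + B x v * (p * t - s * q) = 0) :
    B.IsOrthogonal (B.pairTransvection x v p s q t) := by
  intro y z
  simp only [pairTransvection_apply, map_add, map_smul, add_apply, smul_apply, smul_eq_mul,
    hB.self_eq_zero, ← hB.neg x v, ← hB.neg x y, ← hB.neg v y]
  linear_combination (B x y * B v z - B x z * B v y) * h

def pairTransvectionEquiv (hB : B.IsAlt) (h : q - s + B x v * (p * t - s * q) = 0) :
    M ≃ₗ[R] M :=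
  .ofLinearMap (B.pairTransvection x v p s q t) (B.pairTransvection x v (-p) (-q) (-s) (-t))
    (ext <| pairTransvection_apply_pairTransvection hB h)
    (ext fun y => by
      have := pairTransvection_apply_pairTransvection hB (p := -p) (s := -q) (q := -s) (t := -t)
        (by linear_combination h) y
      simp only [neg_neg] at this
      exact this)

@[simp]
theorem pairTransvectionEquiv_apply (hB : B.IsAlt) (h : q - s + B x v * (p * t - s * q) = 0)
    (y : M) : pairTransvectionEquiv hB h y = B.pairTransvection x v p s q t y := rfl

variable [IsDomain R] [IsPrincipalIdealRing R] {bd : M →ₗ[R] R}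

theorem exists_isOrthogonal_apply_eq_sub_of_ne_zero (hB : B.IsAlt)
    (hbd : Function.Surjective bd) (hD : Function.Surjective (bd - B x)) (hx : bd x ≠ 0) :
    ∃ W : M ≃ₗ[R] M, B.IsOrthogonal W ∧ ∀ y, bd (W y) = bd y - B x y := by
  obtain ⟨v, h₁, h₂⟩ := exists_isCoprime_apply_of_surjective hbd hD hx
  obtain ⟨a, b, hab⟩ := h₁.mul_left h₂
  rw [sub_apply] at hab
  -- `p = -b, s = -a bd v, q = -a (bd v - B x v), t = a bd x` solve `p bd x + q bd v = -1` and
  -- `s bd x + t bd v = 0`, which give `bd ∘ W = bd - B x`, and satisfy the isometry condition.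
  have h : -(a * (bd v - B x v)) - -(a * bd v)
      + B x v * (-b * (a * bd x) - -(a * bd v) * -(a * (bd v - B x v))) = 0 := by
    linear_combination (-(a * B x v)) * hab
  refine ⟨pairTransvectionEquiv hB h, isOrthogonal_pairTransvection hB h, fun y => ?_⟩
  simp only [pairTransvectionEquiv_apply, pairTransvection_apply, map_add, map_smul, smul_eq_mul]
  linear_combination -B x y * hab

theorem exists_isOrthogonal_apply_eq_sub (hB : B.IsAlt)
    (hbd : Function.Surjective bd) (hD : Function.Surjective (bd - B x)) :
    ∃ W : M ≃ₗ[R] M, B.IsOrthogonal W ∧ ∀ y, bd (W y) = bd y - B x y := by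
  by_cases hx : bd x ≠ 0
  · exact exists_isOrthogonal_apply_eq_sub_of_ne_zero hB hbd hD hx
  rw [not_not] at hx
  obtain ⟨u, hu₁, hu₂⟩ := exists_not_dvd_apply_of_surjective hbd hD not_isUnit_zero
  rw [zero_dvd_iff] at hu₁ hu₂
  -- `S y = y + B u y • u`; conjugating by `S` replaces `x` by `x'`, and `bd x' ≠ 0`.
  have h₀ : (0 : R) - 0 + B u u * (1 * 0 - 0 * 0) = 0 := by ring
  let S := pairTransvectionEquiv hB h₀
  set x' := x - (bd - B x) u • u
  have hS : ∀ y, (bd - B x) (S y) = bd y - B x' y := by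
    intro y
    simp only [S, x', pairTransvectionEquiv_apply, pairTransvection_apply, map_add, map_sub,
      map_smul, sub_apply, smul_apply, smul_eq_mul]
    ring
  have hx' : bd x' ≠ 0 := by
    simpa [x', hx] using And.intro hu₂ hu₁
  have hD' : Function.Surjective (bd - B x') := fun r => by
    obtain ⟨z, rfl⟩ := hD r
    exact ⟨S.symm z, by simpa using (hS (S.symm z)).symm⟩
  obtain ⟨W, hWB, hWbd⟩ := exists_isOrthogonal_apply_eq_sub_of_ne_zero hB hbd hD' hx'
  refine ⟨S.symm.trans W,
    (isOrthogonal_pairTransvection hB h₀).linearEquiv_symm.linearEquiv_trans hWB, fun y => ?_⟩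
  simpa [hWbd] using (hS (S.symm y)).symm

end LinearMap

section SumWithX

variable {R M₁ M₂ : Type*} [CommRing R] [AddCommGroup M₁] [Module R M₁] [AddCommGroup M₂]
  [Module R M₂] {bd₁ : M₁ →ₗ[R] R} {bd₂ : M₂ →ₗ[R] R}

theorem snd_apply_graph_neg {e : (M₁ × R) ≃ₗ[R] (M₂ × R)}
    (he : ∀ p, bd₂ (e p).1 + (e p).2 = bd₁ p.1 + p.2) (x : M₁) :
    (e (x, -bd₁ x)).2 = -bd₂ (e (x, -bd₁ x)).1 := by
  linear_combination he (x, -bd₁ x)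

theorem exists_linearEquiv_apply_graph {e : (M₁ × R) ≃ₗ[R] (M₂ × R)}
    (he : ∀ p, bd₂ (e p).1 + (e p).2 = bd₁ p.1 + p.2) :
    ∃ f : M₁ ≃ₗ[R] M₂, ∀ x, e (x, -bd₁ x) = (f x, -bd₂ (f x)) := by
  have he' : ∀ p, bd₁ (e.symm p).1 + (e.symm p).2 = bd₂ p.1 + p.2 := fun p => by
    simpa using (he (e.symm p)).symm
  let f := LinearMap.fst R M₂ R ∘ₗ e.toLinearMap ∘ₗ LinearMap.id.prod (-bd₁)
  let g := LinearMap.fst R M₁ R ∘ₗ e.symm.toLinearMap ∘ₗ LinearMap.id.prod (-bd₂)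
  have hf : ∀ x, e (x, -bd₁ x) = (f x, -bd₂ (f x)) := fun x =>
    Prod.ext rfl (snd_apply_graph_neg he x)
  have hg : ∀ y, e.symm (y, -bd₂ y) = (g y, -bd₁ (g y)) := fun y =>
    Prod.ext rfl (snd_apply_graph_neg he' y)
  refine ⟨.ofLinearMap f g (LinearMap.ext fun y => ?_) (LinearMap.ext fun x => ?_), hf⟩
  · simp [f, ← hg]
  · simp [g, ← hf]

end SumWithX

theorem cancellation_PID_general
    (R : Type) [CommRing R] [IsDomain R] [IsPrincipalIdealRing R]
    (M₁ : Type) [AddCommGroup M₁] [Module R M₁]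
    (M₂ : Type) [AddCommGroup M₂] [Module R M₂]
    (lam₁ : M₁ →ₗ[R] M₁ →ₗ[R] R) (bd₁ : M₁ →ₗ[R] R)
    (lam₂ : M₂ →ₗ[R] M₂ →ₗ[R] R) (halt₂ : ∀ v : M₂, lam₂ v v = 0) (bd₂ : M₂ →ₗ[R] R)
    (hbd₁ : Function.Surjective bd₁) (hbd₂ : Function.Surjective bd₂)
    (hiso : ∃ e : (M₁ × R) ≃ₗ[R] (M₂ × R),
      (∀ p q : M₁ × R,
        lam₂ (e p).1 (e q).1 + bd₂ (e p).1 * (e q).2 - bd₂ (e q).1 * (e p).2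
          = lam₁ p.1 q.1 + bd₁ p.1 * q.2 - bd₁ q.1 * p.2) ∧
      (∀ p : M₁ × R, bd₂ (e p).1 + (e p).2 = bd₁ p.1 + p.2)) :
    ∃ e : M₁ ≃ₗ[R] M₂,
      (∀ x y : M₁, lam₂ (e x) (e y) = lam₁ x y) ∧ ∀ x : M₁, bd₂ (e x) = bd₁ x := by
  obtain ⟨e, he_lam, he_bd⟩ := hiso
  obtain ⟨f, hf⟩ := exists_linearEquiv_apply_graph he_bd
  have hf_lam : ∀ x y, lam₂ (f x) (f y) = lam₁ x y := fun x y => by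
    have := he_lam (x, -bd₁ x) (y, -bd₁ y)
    rw [hf, hf] at this
    linear_combination this
  set x₀ := (e (0, 1)).1
  have hf_bd : ∀ x, bd₂ (f x) - lam₂ x₀ (f x) = bd₁ x := fun x => by
    have h₁ := he_lam (0, 1) (x, -bd₁ x)
    have h₂ := he_bd (0, 1)
    rw [hf] at h₁
    simp only [map_zero, LinearMap.zero_apply] at h₁ h₂
    linear_combination -h₁ - bd₂ (f x) * h₂
  have hD : Function.Surjective (bd₂ - lam₂ x₀) := fun r =>
    let ⟨x, hx⟩ := hbd₁ r; ⟨f x, (hf_bd x).trans hx⟩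
  obtain ⟨W, hW_lam, hW_bd⟩ := LinearMap.exists_isOrthogonal_apply_eq_sub halt₂ hbd₂ hD
  exact ⟨f.trans W, fun x y => (hW_lam _ _).trans (hf_lam x y),
    fun x => (hW_bd _).trans (hf_bd x)⟩

/-- cancellation for PIDs: if `(M₁,λ₁,∂₁)` and `(M₂,λ₂,∂₂)` are formed
spaces with boundary over a PID with surjective boundary maps, and `(M₁,λ₁,∂₁) # X` is
isomorphic to `(M₂,λ₂,∂₂) # X`, then `(M₁,λ₁,∂₁) ≅ (M₂,λ₂,∂₂)`.  Here `(Mᵢ,λᵢ,∂ᵢ) # X` is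
realized on `Mᵢ × R` with form `((x,s),(y,t)) ↦ λᵢ(x,y) + ∂ᵢ(x)·t - ∂ᵢ(y)·s` and boundary
`(x,s) ↦ ∂ᵢ(x) + s`. -/
theorem cancellation_PID
    (R : Type) [CommRing R] [IsDomain R] [IsPrincipalIdealRing R]
    (M₁ : Type) [AddCommGroup M₁] [Module R M₁] [Module.Finite R M₁] [Module.Free R M₁]
    (M₂ : Type) [AddCommGroup M₂] [Module R M₂] [Module.Finite R M₂] [Module.Free R M₂]
    (lam₁ : M₁ →ₗ[R] M₁ →ₗ[R] R) (halt₁ : ∀ v : M₁, lam₁ v v = 0) (bd₁ : M₁ →ₗ[R] R)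
    (lam₂ : M₂ →ₗ[R] M₂ →ₗ[R] R) (halt₂ : ∀ v : M₂, lam₂ v v = 0) (bd₂ : M₂ →ₗ[R] R)
    (hbd₁ : Function.Surjective bd₁) (hbd₂ : Function.Surjective bd₂)
    (hiso : ∃ e : (M₁ × R) ≃ₗ[R] (M₂ × R),
      (∀ p q : M₁ × R,
        lam₂ (e p).1 (e q).1 + bd₂ (e p).1 * (e q).2 - bd₂ (e q).1 * (e p).2
          = lam₁ p.1 q.1 + bd₁ p.1 * q.2 - bd₁ q.1 * p.2) ∧
      (∀ p : M₁ × R, bd₂ (e p).1 + (e p).2 = bd₁ p.1 + p.2)) :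
    ∃ e : M₁ ≃ₗ[R] M₂,
      (∀ x y : M₁, lam₂ (e x) (e y) = lam₁ x y) ∧ ∀ x : M₁, bd₂ (e x) = bd₁ x :=
  cancellation_PID_general R M₁ M₂ lam₁ bd₁ lam₂ halt₂ bd₂ hbd₁ hbd₂ hiso
end
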